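/- Dirichlet's integral: for real (or complex with positive real part) exponents b_1,...,b_n, the integral over the standard (n−1)-dimensional probability simplex of ∏_i p_i^{b_i − 1} with respect to the canonical (Lebesgue-type) measure equals ∏_i Γ(b_i) / Γ(1 + ∑_i b_i) times n! (equivalently, with respect to Lebesgue measure on the simplex coordinates, ∏_i Γ(b_i)/Γ(∑_i b_i)). -/

import Mathlib

/-!
Induction on the number of free coordinates. With exponents `a` on the free coordinates and `γ`
on the eliminated one, split off the last free coordinate `t`, with exponent `α`: the others
range over the simplex of size `1 - t`, and the dilation `z ↦ (1 - t) • z` turns the inner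
integral into `(1 - t) ^ (∑ a' + γ - 1)` times the unit-simplex integral for the remaining
exponents `a'`. The outer integral is then the Beta integral `B(α, ∑ a' + γ)`, and the Gamma
factors telescope. Working with `ℝ≥0∞`-valued integrals makes Tonelli available without any
integrability bookkeeping.
-/

open MeasureTheory ProbabilityTheory Set
open scoped ENNReal

theorem MeasureTheory.Measure.lintegral_eq_ofReal_mul_lintegral_comp_smul {E : Type*}
    [NormedAddCommGroup E] [NormedSpace ℝ E] [MeasurableSpace E] [BorelSpace E]
    [FiniteDimensional ℝ E] (μ : Measure E) [μ.IsAddHaarMeasure] (f : E → ℝ≥0∞) {R : ℝ}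
    (hR : R ≠ 0) :
    ∫⁻ x, f x ∂μ = ENNReal.ofReal (|R| ^ Module.finrank ℝ E) * ∫⁻ x, f (R • x) ∂μ := by
  have hRd : 0 < |R| ^ Module.finrank ℝ E := by positivity
  have hmap : ∫⁻ x, f (R • x) ∂μ = ∫⁻ y, f y ∂(Measure.map (R • ·) μ) :=
    (lintegral_map_equiv f (Homeomorph.smul (isUnit_iff_ne_zero.2 hR).unit).toMeasurableEquiv).symm
  rw [hmap, map_addHaar_smul μ hR, lintegral_smul_measure, smul_eq_mul, ← mul_assoc,
    ← ENNReal.ofReal_mul hRd.le, abs_inv, abs_pow, mul_inv_cancel₀ hRd.ne', ENNReal.ofReal_one,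
    one_mul]

theorem lintegral_eq_lintegral_lintegral_snoc {α : Type*} [MeasureSpace α]
    [SigmaFinite (volume : Measure α)] {n : ℕ} {f : (Fin (n + 1) → α) → ℝ≥0∞}
    (hf : Measurable f) :
    ∫⁻ y, f y = ∫⁻ t, ∫⁻ z, f (Fin.snoc z t) := by
  set e := MeasurableEquiv.piFinSuccAbove (fun _ : Fin (n + 1) => α) (Fin.last n)
  have he : MeasurePreserving e := volume_preserving_piFinSuccAbove _ _
  rw [← he.symm.lintegral_comp_emb e.symm.measurableEmbedding, Measure.volume_eq_prod,
    lintegral_prod (fun p => f (e.symm p)) (hf.comp e.symm.measurable).aemeasurable]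
  simp only [e, MeasurableEquiv.piFinSuccAbove_symm_apply, Fin.insertNthEquiv, Equiv.coe_fn_mk,
    Fin.insertNth_last']

theorem lintegral_Ioo_rpow_mul_one_sub_rpow {α β : ℝ} (hα : 0 < α) (hβ : 0 < β) :
    ∫⁻ x in Ioo 0 1, ENNReal.ofReal (x ^ (α - 1) * (1 - x) ^ (β - 1)) =
      ENNReal.ofReal (beta α β) := by
  have hB := beta_pos hα hβ
  have h := lintegral_betaPDF_eq_one hα hβ
  simp only [lintegral_betaPDF, mul_assoc, ENNReal.ofReal_mul (one_div_pos.2 hB).le,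
    lintegral_const_mul' _ _ ENNReal.ofReal_ne_top] at h
  rw [← ENNReal.eq_div_iff (by simpa using hB) ENNReal.ofReal_ne_top] at h
  rw [h, one_div, one_div, ENNReal.ofReal_inv_of_pos hB, inv_inv]

def scaledSimplex (n : ℕ) (c : ℝ) : Set (Fin n → ℝ) :=
  {z | (∀ j, 0 ≤ z j) ∧ ∑ j, z j ≤ c}

/-- The Dirichlet integrand on the simplex of size `c`, with the last coordinate `c - ∑ z`
eliminated and extended by `0` off the simplex. -/
noncomputable def dirichletKernel {n : ℕ} (a : Fin n → ℝ) (γ c : ℝ) : (Fin n → ℝ) → ℝ≥0∞ :=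
  (scaledSimplex n c).indicator fun z =>
    ENNReal.ofReal ((∏ j, z j ^ (a j - 1)) * (c - ∑ j, z j) ^ (γ - 1))

theorem measurableSet_scaledSimplex (n : ℕ) (c : ℝ) : MeasurableSet (scaledSimplex n c) :=
  measurableSet_setOfPred.2 (by fun_prop)

theorem measurable_dirichletKernel {n : ℕ} (a : Fin n → ℝ) (γ c : ℝ) :
    Measurable (dirichletKernel a γ c) :=
  Measurable.indicator (by fun_prop) (measurableSet_scaledSimplex n c)

theorem dirichletKernel_of_neg {n : ℕ} (a : Fin n → ℝ) (γ : ℝ) {c : ℝ} (hc : c < 0) :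
    dirichletKernel a γ c = 0 := by
  have : scaledSimplex n c = ∅ := eq_empty_of_forall_notMem fun _ hz =>
    (Finset.sum_nonneg fun j _ => hz.1 j).not_gt (hz.2.trans_lt hc)
  rw [dirichletKernel, this, indicator_empty']

theorem snoc_mem_scaledSimplex_iff {n : ℕ} {c t : ℝ} {z : Fin n → ℝ} :
    Fin.snoc z t ∈ scaledSimplex (n + 1) c ↔ 0 ≤ t ∧ z ∈ scaledSimplex n (c - t) := by
  simp only [scaledSimplex, mem_ofPred_eq, Fin.forall_fin_succ', Fin.snoc_castSucc, Fin.snoc_last,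
    Fin.sum_univ_castSucc, le_sub_iff_add_le]
  tauto

theorem smul_mem_scaledSimplex_iff {n : ℕ} {c : ℝ} (hc : 0 < c) {w : Fin n → ℝ} :
    c • w ∈ scaledSimplex n c ↔ w ∈ scaledSimplex n 1 := by
  simp only [scaledSimplex, mem_ofPred_eq, Pi.smul_apply, smul_eq_mul, ← Finset.mul_sum,
    mul_nonneg_iff_of_pos_left hc, mul_le_iff_le_one_right hc]

theorem dirichletKernel_snoc {n : ℕ} (a : Fin (n + 1) → ℝ) (γ c t : ℝ) (z : Fin n → ℝ) :
    dirichletKernel a γ c (Fin.snoc z t) =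
      (Ici 0).indicator (fun t => ENNReal.ofReal (t ^ (a (Fin.last n) - 1))) t *
        dirichletKernel (Fin.init a) γ (c - t) z := by
  by_cases h : 0 ≤ t ∧ z ∈ scaledSimplex n (c - t)
  · obtain ⟨ht, hz⟩ := h
    rw [dirichletKernel, dirichletKernel, indicator_of_mem (snoc_mem_scaledSimplex_iff.2 ⟨ht, hz⟩),
      indicator_of_mem (mem_Ici.2 ht), indicator_of_mem hz,
      ← ENNReal.ofReal_mul (Real.rpow_nonneg ht _)]
    simp only [Fin.prod_univ_castSucc, Fin.sum_univ_castSucc, Fin.snoc_castSucc, Fin.snoc_last,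
      Fin.init]
    ring_nf
  · rw [dirichletKernel, indicator_of_notMem (mt snoc_mem_scaledSimplex_iff.1 h)]
    rw [not_and_or] at h
    rcases h with ht | hz
    · rw [indicator_of_notMem (mt mem_Ici.1 ht), zero_mul]
    · rw [dirichletKernel, indicator_of_notMem hz, mul_zero]

theorem dirichletKernel_smul {n : ℕ} (a : Fin n → ℝ) (γ : ℝ) {c : ℝ} (hc : 0 < c)
    (w : Fin n → ℝ) :
    dirichletKernel a γ c (c • w) =
      ENNReal.ofReal (c ^ (∑ j, (a j - 1) + (γ - 1))) * dirichletKernel a γ 1 w := by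
  by_cases hw : w ∈ scaledSimplex n 1
  · have hsum : 0 ≤ 1 - ∑ j, w j := sub_nonneg.2 hw.2
    rw [dirichletKernel, dirichletKernel, indicator_of_mem ((smul_mem_scaledSimplex_iff hc).2 hw),
      indicator_of_mem hw, ← ENNReal.ofReal_mul (by positivity)]
    congr 1
    simp only [Pi.smul_apply, smul_eq_mul, ← Finset.mul_sum, Real.mul_rpow hc.le (hw.1 _),
      Finset.prod_mul_distrib, ← Real.rpow_sum_of_pos hc, Real.rpow_add hc,
      show c - c * ∑ j, w j = c * (1 - ∑ j, w j) by ring, Real.mul_rpow hc.le hsum]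
    ring
  · rw [dirichletKernel, dirichletKernel,
      indicator_of_notMem (mt (smul_mem_scaledSimplex_iff hc).1 hw), indicator_of_notMem hw,
      mul_zero]

theorem lintegral_dirichletKernel_eq_rpow_mul {n : ℕ} (a : Fin n → ℝ) (γ : ℝ) {c : ℝ} (hc : 0 < c) :
    ∫⁻ z, dirichletKernel a γ c z =
      ENNReal.ofReal (c ^ (∑ j, a j + γ - 1)) * ∫⁻ z, dirichletKernel a γ 1 z := by
  rw [volume.lintegral_eq_ofReal_mul_lintegral_comp_smul _ hc.ne']
  simp only [dirichletKernel_smul a γ hc, lintegral_const_mul _ (measurable_dirichletKernel a γ 1),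
    ← mul_assoc, Module.finrank_fin_fun, abs_of_pos hc]
  rw [← ENNReal.ofReal_mul (by positivity), ← Real.rpow_natCast, ← Real.rpow_add hc,
    Finset.sum_sub_distrib]
  simp only [Finset.sum_const, Finset.card_univ, Fintype.card_fin, nsmul_eq_mul, mul_one]
  ring_nf

theorem lintegral_dirichletKernel_snoc {n : ℕ} (a : Fin (n + 1) → ℝ) (γ : ℝ) {t : ℝ}
    (ht : t ∈ Ioo 0 1) :
    ∫⁻ z, dirichletKernel a γ 1 (Fin.snoc z t) =
      ENNReal.ofReal (t ^ (a (Fin.last n) - 1) * (1 - t) ^ (∑ j, Fin.init a j + γ - 1)) *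
        ∫⁻ z, dirichletKernel (Fin.init a) γ 1 z := by
  simp only [dirichletKernel_snoc, lintegral_const_mul _ (measurable_dirichletKernel _ _ _),
    indicator_of_mem (mem_Ici.2 ht.1.le),
    lintegral_dirichletKernel_eq_rpow_mul _ _ (sub_pos.2 ht.2),
    ENNReal.ofReal_mul (Real.rpow_nonneg ht.1.le _), mul_assoc]

theorem lintegral_dirichletKernel_succ {n : ℕ} (a : Fin (n + 1) → ℝ) (γ : ℝ)
    (hα : 0 < a (Fin.last n)) (hs : 0 < ∑ j, Fin.init a j + γ) :
    ∫⁻ z, dirichletKernel a γ 1 z =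
      ENNReal.ofReal (beta (a (Fin.last n)) (∑ j, Fin.init a j + γ)) *
        ∫⁻ z, dirichletKernel (Fin.init a) γ 1 z := by
  have hvanish : ∀ t ∉ Icc (0 : ℝ) 1, ∫⁻ z, dirichletKernel a γ 1 (Fin.snoc z t) = 0 := by
    intro t ht
    rcases not_and_or.1 ht with ht | ht
    · simp [dirichletKernel_snoc, indicator_of_notMem (mt mem_Ici.1 ht)]
    · simp [dirichletKernel_snoc, dirichletKernel_of_neg _ _ (sub_neg.2 (not_le.1 ht))]
  calc ∫⁻ z, dirichletKernel a γ 1 z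
      = ∫⁻ t, ∫⁻ z, dirichletKernel a γ 1 (Fin.snoc z t) :=
        lintegral_eq_lintegral_lintegral_snoc (measurable_dirichletKernel a γ 1)
    _ = ∫⁻ t in Icc 0 1, ∫⁻ z, dirichletKernel a γ 1 (Fin.snoc z t) :=
        (setLIntegral_eq_of_support_subset (Function.support_subset_iff'.2 hvanish)).symm
    _ = ∫⁻ t in Ioo 0 1, ∫⁻ z, dirichletKernel a γ 1 (Fin.snoc z t) := by
        rw [Measure.restrict_congr_set Ioo_ae_eq_Icc]
    _ = _ := by
        rw [setLIntegral_congr_fun measurableSet_Ioo fun t => lintegral_dirichletKernel_snoc a γ,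
          lintegral_mul_const _ (by fun_prop), lintegral_Ioo_rpow_mul_one_sub_rpow hα hs]

theorem lintegral_dirichletKernel_one {n : ℕ} (a : Fin n → ℝ) (γ : ℝ) (ha : ∀ j, 0 < a j)
    (hγ : 0 < γ) :
    ∫⁻ z, dirichletKernel a γ 1 z =
      ENNReal.ofReal ((∏ j, Real.Gamma (a j)) * Real.Gamma γ / Real.Gamma (∑ j, a j + γ)) := by
  induction n with
  | zero =>
    simp [dirichletKernel, scaledSimplex, (Real.Gamma_pos_of_pos hγ).ne', volume_pi]
  | succ n ih =>
    have hs : 0 < ∑ j, Fin.init a j + γ :=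
      add_pos_of_nonneg_of_pos (Finset.sum_nonneg fun j _ => (ha _).le) hγ
    rw [lintegral_dirichletKernel_succ a γ (ha _) hs, ih (Fin.init a) fun j => ha _,
      ← ENNReal.ofReal_mul (beta_pos (ha _) hs).le, Fin.prod_univ_castSucc, Fin.sum_univ_castSucc,
      beta, add_right_comm, add_comm _ (a (Fin.last n))]
    have hΓs := (Real.Gamma_pos_of_pos hs).ne'
    congr 1
    field_simp
    rfl

/-- Dirichlet's integral: over the coordinates `(y₁,…,yₙ)` of the standard `n`-dimensional
probability simplex on `n+1` outcomes (with `p_{n+1} = 1 - ∑ yᵢ`), with respect to Lebesgue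
measure, `∫ ∏ pᵢ^{bᵢ-1} = ∏ Γ(bᵢ) / Γ(∑ bᵢ)`. -/
theorem dirichlet_integral (n : ℕ) (b : Fin (n + 1) → ℝ) (hb : ∀ i, 0 < b i) :
    (∫ y in {y : Fin n → ℝ | (∀ i, 0 ≤ y i) ∧ ∑ i, y i ≤ 1},
        (∏ i : Fin n, y i ^ (b i.castSucc - 1)) *
          (1 - ∑ i, y i) ^ (b (Fin.last n) - 1)) =
      (∏ i, Real.Gamma (b i)) / Real.Gamma (∑ i, b i) := by
  change ∫ y in scaledSimplex n 1, _ = _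
  have hnonneg : 0 ≤ᵐ[volume.restrict (scaledSimplex n 1)] fun y : Fin n → ℝ =>
      (∏ i : Fin n, y i ^ (b i.castSucc - 1)) * (1 - ∑ i, y i) ^ (b (Fin.last n) - 1) := by
    filter_upwards [ae_restrict_mem (measurableSet_scaledSimplex n 1)] with y hy
    exact mul_nonneg (Finset.prod_nonneg fun i _ => Real.rpow_nonneg (hy.1 i) _)
      (Real.rpow_nonneg (sub_nonneg.2 hy.2) _)
  rw [integral_eq_lintegral_of_nonneg_ae hnonneg (by fun_prop),
    ← lintegral_indicator (measurableSet_scaledSimplex n 1)]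
  change (∫⁻ y, dirichletKernel (fun i => b i.castSucc) (b (Fin.last n)) 1 y).toReal = _
  rw [lintegral_dirichletKernel_one _ _ (fun i => hb _) (hb _),
    ← Fin.prod_univ_castSucc (fun i => Real.Gamma (b i)), ← Fin.sum_univ_castSucc]
  exact ENNReal.toReal_ofReal <|
    div_nonneg (Finset.prod_nonneg fun i _ => (Real.Gamma_pos_of_pos (hb i)).le)
      (Real.Gamma_pos_of_pos (Finset.sum_pos (fun i _ => hb i) Finset.univ_nonempty)).le
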